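/- For any f₁, f₂ ∈ L¹(ℝ^N), with h₁ := (1 + c₁₁/2)f₁ − (c₂₂/2)f₂ and h₂ := −(c₁₁/2)f₁ + (1 + c₂₂/2)f₂, and c := c₁₁c₂₂/(2 − c₁₁c₂₂), the identity E_K^{c₁₁,c₂₂}(f₁,f₂) = [(2 − c₁₁c₂₂)/(2 + c₁₁ + c₂₂)] · E_K^{c,c}(h₁,h₂) holds, provided 2 + c₁₁ + c₂₂ ≠ 0 and 2 − c₁₁c₂₂ ≠ 0. -/
import Mathlib


open MeasureTheory Set Metric

noncomputable def J (N : ℕ) (K f g : EuclideanSpace ℝ (Fin N) → ℝ) : ℝ :=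
  ∫ x, ∫ y, f x * g y * K (x - y)

noncomputable def En (N : ℕ) (K : EuclideanSpace ℝ (Fin N) → ℝ) (c11 c22 : ℝ)
    (f1 f2 : EuclideanSpace ℝ (Fin N) → ℝ) : ℝ :=
  c11 * J N K f1 f1 + c22 * J N K f2 f2 - 2 * J N K f1 f2

def RadialNonincreasing (N : ℕ) (K : EuclideanSpace ℝ (Fin N) → ℝ) : Prop :=
  ∀ x y : EuclideanSpace ℝ (Fin N), ‖x‖ ≤ ‖y‖ → K y ≤ K x

def Admissible (N : ℕ) (m1 m2 : ℝ) (f1 f2 : EuclideanSpace ℝ (Fin N) → ℝ) : Prop :=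
  Integrable f1 ∧ Integrable f2 ∧
    (∀ᵐ x ∂volume, 0 ≤ f1 x) ∧ (∀ᵐ x ∂volume, 0 ≤ f2 x) ∧
    (∀ᵐ x ∂volume, f1 x + f2 x ≤ 1) ∧
    (∫ x, f1 x) = m1 ∧ (∫ x, f2 x) = m2

def Minimizes (N : ℕ) (K : EuclideanSpace ℝ (Fin N) → ℝ) (c11 c22 m1 m2 : ℝ)
    (f1 f2 : EuclideanSpace ℝ (Fin N) → ℝ) : Prop :=
  Admissible N m1 m2 f1 f2 ∧
    ∀ g1 g2, Admissible N m1 m2 g1 g2 →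
      En N K c11 c22 f1 f2 ≤ En N K c11 c22 g1 g2



lemma J_bilin (N : ℕ) (K f1 f2 : EuclideanSpace ℝ (Fin N) → ℝ)
    (h11 : Integrable (fun p : EuclideanSpace ℝ (Fin N) × EuclideanSpace ℝ (Fin N) =>
      f1 p.1 * f1 p.2 * K (p.1 - p.2)) (volume.prod volume))
    (h12 : Integrable (fun p : EuclideanSpace ℝ (Fin N) × EuclideanSpace ℝ (Fin N) =>
      f1 p.1 * f2 p.2 * K (p.1 - p.2)) (volume.prod volume))
    (h21 : Integrable (fun p : EuclideanSpace ℝ (Fin N) × EuclideanSpace ℝ (Fin N) =>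
      f2 p.1 * f1 p.2 * K (p.1 - p.2)) (volume.prod volume))
    (h22 : Integrable (fun p : EuclideanSpace ℝ (Fin N) × EuclideanSpace ℝ (Fin N) =>
      f2 p.1 * f2 p.2 * K (p.1 - p.2)) (volume.prod volume))
    (a b c d : ℝ) :
    J N K (fun x => a * f1 x + b * f2 x) (fun x => c * f1 x + d * f2 x)
      = a*c * J N K f1 f1 + a*d * J N K f1 f2 + b*c * J N K f2 f1 + b*d * J N K f2 f2 := by
  unfold J
  have inner : ∀ᵐ x ∂(volume : Measure (EuclideanSpace ℝ (Fin N))),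
      (∫ y, (a * f1 x + b * f2 x) * (c * f1 y + d * f2 y) * K (x - y))
        = a*c * (∫ y, f1 x * f1 y * K (x - y)) + a*d * (∫ y, f1 x * f2 y * K (x - y))
          + b*c * (∫ y, f2 x * f1 y * K (x - y)) + b*d * (∫ y, f2 x * f2 y * K (x - y)) := by
    filter_upwards [h11.prod_right_ae, h12.prod_right_ae, h21.prod_right_ae,
      h22.prod_right_ae] with x i11 i12 i21 i22
    have : (fun y => (a * f1 x + b * f2 x) * (c * f1 y + d * f2 y) * K (x - y))
        = fun y => a*c * (f1 x * f1 y * K (x - y)) + a*d * (f1 x * f2 y * K (x - y))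
          + b*c * (f2 x * f1 y * K (x - y)) + b*d * (f2 x * f2 y * K (x - y)) := by
      funext y; ring
    rw [this, integral_add, integral_add, integral_add, integral_const_mul,
      integral_const_mul, integral_const_mul, integral_const_mul]
    · exact (i11.const_mul _)
    · exact (i12.const_mul _)
    · exact ((i11.const_mul _).add (i12.const_mul _))
    · exact (i21.const_mul _)
    · exact (((i11.const_mul _).add (i12.const_mul _)).add (i21.const_mul _))
    · exact (i22.const_mul _)
  rw [integral_congr_ae inner]
  rw [integral_add, integral_add, integral_add, integral_const_mul, integral_const_mul,
    integral_const_mul, integral_const_mul]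
  · exact (h11.integral_prod_left.const_mul _)
  · exact (h12.integral_prod_left.const_mul _)
  · exact ((h11.integral_prod_left.const_mul _).add (h12.integral_prod_left.const_mul _))
  · exact (h21.integral_prod_left.const_mul _)
  · exact (((h11.integral_prod_left.const_mul _).add
      (h12.integral_prod_left.const_mul _)).add (h21.integral_prod_left.const_mul _))
  · exact (h22.integral_prod_left.const_mul _)

lemma J_symm (N : ℕ) (K f1 f2 : EuclideanSpace ℝ (Fin N) → ℝ)
    (hKsymm : ∀ x, K (-x) = K x)
    (h21 : Integrable (fun p : EuclideanSpace ℝ (Fin N) × EuclideanSpace ℝ (Fin N) =>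
      f2 p.1 * f1 p.2 * K (p.1 - p.2)) (volume.prod volume)) :
    J N K f2 f1 = J N K f1 f2 := by
  unfold J
  rw [integral_integral_swap h21]
  refine integral_congr_ae (Filter.Eventually.of_forall fun x => ?_)
  refine integral_congr_ae (Filter.Eventually.of_forall fun y => ?_)
  have hk : K (y - x) = K (x - y) := by rw [← neg_sub x y, hKsymm]
  simp only [hk]; ring

theorem stmt_8 (N : ℕ) (K f1 f2 : EuclideanSpace ℝ (Fin N) → ℝ) (c11 c22 : ℝ)
    (hKsymm : ∀ x, K (-x) = K x)
    (h11 : Integrable (fun p : EuclideanSpace ℝ (Fin N) × EuclideanSpace ℝ (Fin N) =>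
      f1 p.1 * f1 p.2 * K (p.1 - p.2)) (volume.prod volume))
    (h12 : Integrable (fun p : EuclideanSpace ℝ (Fin N) × EuclideanSpace ℝ (Fin N) =>
      f1 p.1 * f2 p.2 * K (p.1 - p.2)) (volume.prod volume))
    (h21 : Integrable (fun p : EuclideanSpace ℝ (Fin N) × EuclideanSpace ℝ (Fin N) =>
      f2 p.1 * f1 p.2 * K (p.1 - p.2)) (volume.prod volume))
    (h22 : Integrable (fun p : EuclideanSpace ℝ (Fin N) × EuclideanSpace ℝ (Fin N) =>
      f2 p.1 * f2 p.2 * K (p.1 - p.2)) (volume.prod volume))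
    (hden1 : 2 + c11 + c22 ≠ 0) (hden2 : 2 - c11 * c22 ≠ 0) :
    En N K c11 c22 f1 f2 =
      ((2 - c11 * c22) / (2 + c11 + c22)) *
        En N K (c11 * c22 / (2 - c11 * c22)) (c11 * c22 / (2 - c11 * c22))
          (fun x => (1 + c11 / 2) * f1 x - (c22 / 2) * f2 x)
          (fun x => -(c11 / 2) * f1 x + (1 + c22 / 2) * f2 x) := by
  have e1 : (fun x : EuclideanSpace ℝ (Fin N) => (1 + c11 / 2) * f1 x - (c22 / 2) * f2 x)
      = fun x => (1 + c11 / 2) * f1 x + (-(c22 / 2)) * f2 x := by funext x; ring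
  unfold En
  rw [e1]
  simp only [J_bilin N K f1 f2 h11 h12 h21 h22, J_symm N K f1 f2 hKsymm h21]
  field_simp
  ring
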